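/- Let A be a deterministic finite automaton with strongly connected transition graph. Then every state p belongs to some F-clique. -/

import Mathlib

def Adj {V : Type*} (E : V → Multiset V) (p q : V) : Prop := q ∈ E p

def StronglyConnected {V : Type*} (E : V → Multiset V) : Prop :=
  ∀ p q : V, Relation.ReflTransGen (Adj E) p q

def HasCycle {V : Type*} (E : V → Multiset V) (n : ℕ) : Prop :=
  0 < n ∧ ∃ c : ZMod n → V, ∀ i, c (i + 1) ∈ E (c i)

def CycleGcd {V : Type*} (E : V → Multiset V) (k : ℕ) : Prop :=
  (∀ n, HasCycle E n → k ∣ n) ∧ ∀ m, (∀ n, HasCycle E n → m ∣ n) → m ∣ k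

def IsColoring {V : Type*} {d : ℕ} (E : V → Multiset V) (δ : V → Fin d → V) : Prop :=
  ∀ v, (List.ofFn (δ v) : Multiset V) = E v

def run {V A : Type*} (δ : V → A → V) (p : V) (s : List A) : V :=
  s.foldl δ p

def wordImage {V A : Type*} [Fintype V] [DecidableEq V] (δ : V → A → V) (s : List A) : Finset V :=
  Finset.univ.image (fun p => run δ p s)

def IsPathLen {V : Type*} (E : V → Multiset V) (p q : V) (n : ℕ) : Prop :=
  ∃ c : Fin (n + 1) → V, c 0 = p ∧ c (Fin.last n) = q ∧
    ∀ i : Fin n, c i.succ ∈ E (c i.castSucc)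

def SyncPair {V A : Type*} (δ : V → A → V) (p q : V) : Prop :=
  ∃ s : List A, run δ p s = run δ q s

def StablePair {V A : Type*} (δ : V → A → V) (p q : V) : Prop :=
  ∀ u : List A, SyncPair δ (run δ p u) (run δ q u)

def DeadlockPair {V A : Type*} (δ : V → A → V) (p q : V) : Prop :=
  ∀ s : List A, run δ p s ≠ run δ q s

def IsFClique {V A : Type*} [Fintype V] [DecidableEq V] (δ : V → A → V) (F : Finset V) : Prop :=
  (∀ p ∈ F, ∀ q ∈ F, p ≠ q → DeadlockPair δ p q) ∧
  ∀ G : Finset V, (∀ p ∈ G, ∀ q ∈ G, p ≠ q → DeadlockPair δ p q) → G.card ≤ F.card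

noncomputable def levelOf {V : Type*} (f : V → V) (v : V) : ℕ :=
  sInf {n | ∃ m, 0 < m ∧ f^[m] (f^[n] v) = f^[n] v}

noncomputable def rootOf {V : Type*} (f : V → V) (v : V) : V := f^[levelOf f v] v

noncomputable def maxLevel {V : Type*} [Fintype V] (f : V → V) : ℕ :=
  Finset.univ.sup (levelOf f)

def UniqueMaxTree {V : Type*} [Fintype V] (f : V → V) : Prop :=
  0 < maxLevel f ∧ ∃ r : V, ∀ v : V, levelOf f v = maxLevel f → rootOf f v = r

def HasCycleIn {V : Type*} (E : V → Multiset V) (S : Finset V) (n : ℕ) : Prop :=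
  0 < n ∧ ∃ c : ZMod n → V, (∀ i, c i ∈ S) ∧ ∀ i, c (i + 1) ∈ E (c i)

def CycleGcdIn {V : Type*} (E : V → Multiset V) (S : Finset V) (k : ℕ) : Prop :=
  (∀ n, HasCycleIn E S n → k ∣ n) ∧ ∀ m, (∀ n, HasCycleIn E S n → m ∣ n) → m ∣ k


/-!
Words act on deadlock sets without collapsing them: a deadlock pair stays a deadlock pair after
reading any word, so the image of an F-clique under a word is again an F-clique of the same size.
Strong connectivity lets us pick a word carrying some state of a fixed F-clique to `p`.
-/

section Deadlock

variable {V A : Type*} (δ : V → A → V)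

theorem run_append (p : V) (s t : List A) : run δ p (s ++ t) = run δ (run δ p s) t :=
  List.foldl_append

variable {δ}

theorem DeadlockPair.run {p q : V} (h : DeadlockPair δ p q) (s : List A) :
    DeadlockPair δ (run δ p s) (run δ q s) := fun t => by
  simpa only [run_append] using h (s ++ t)

theorem Set.Pairwise.injOn_run {S : Set V} (hS : S.Pairwise (DeadlockPair δ)) (s : List A) :
    S.InjOn (run δ · s) := fun _ hp _ hq hpq =>
  by_contra fun hne => hS hp hq hne s hpq

theorem Set.Pairwise.image_run {S : Set V} (hS : S.Pairwise (DeadlockPair δ)) (s : List A) :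
    ((run δ · s) '' S).Pairwise (DeadlockPair δ) :=
  (hS.injOn_run s).pairwise_image.mpr fun _ hp _ hq hne => (hS hp hq hne).run s

end Deadlock

section FClique

variable {V A : Type*} [Fintype V] [DecidableEq V] {δ : V → A → V}

theorem isFClique_iff {F : Finset V} :
    IsFClique δ F ↔ (F : Set V).Pairwise (DeadlockPair δ) ∧
      ∀ G : Finset V, (G : Set V).Pairwise (DeadlockPair δ) → G.card ≤ F.card :=
  Iff.rfl

variable (δ) in
theorem exists_isFClique : ∃ F : Finset V, IsFClique δ F := by
  classical
  obtain ⟨F, hF, hmax⟩ :=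
    ({G | (G : Set V).Pairwise (DeadlockPair δ)} : Finset (Finset V)).exists_max_image
      Finset.card ⟨∅, by simp⟩
  simp only [Finset.mem_filter, Finset.mem_univ, true_and] at hF hmax
  exact ⟨F, isFClique_iff.mpr ⟨hF, hmax⟩⟩

theorem IsFClique.nonempty [Nonempty V] {F : Finset V} (hF : IsFClique δ F) : F.Nonempty := by
  obtain ⟨p⟩ := ‹Nonempty V›
  have := (isFClique_iff.mp hF).2 {p} (by simp)
  exact Finset.card_pos.mp (by simpa using this)

theorem IsFClique.image_run {F : Finset V} (hF : IsFClique δ F) (s : List A) :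
    IsFClique δ (F.image (run δ · s)) := by
  obtain ⟨hpair, hmax⟩ := isFClique_iff.mp hF
  refine isFClique_iff.mpr ⟨by simpa only [Finset.coe_image] using hpair.image_run s, ?_⟩
  rw [Finset.card_image_of_injOn (hpair.injOn_run s)]
  exact hmax

end FClique

/-- in a DFA with strongly connected transition graph, every state
belongs to some F-clique. -/
theorem stmt5 {V A : Type*} [Fintype V] [DecidableEq V]
    (δ : V → A → V)
    (hsc : ∀ p q : V, ∃ s : List A, run δ p s = q)
    (p : V) :
    ∃ F : Finset V, IsFClique δ F ∧ p ∈ F := by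
  have : Nonempty V := ⟨p⟩
  obtain ⟨F, hF⟩ := exists_isFClique δ
  obtain ⟨q, hq⟩ := hF.nonempty
  obtain ⟨s, hs⟩ := hsc q p
  exact ⟨F.image (run δ · s), hF.image_run s, Finset.mem_image.mpr ⟨q, hq, hs⟩⟩
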